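/- Let W = [0,1] × {0} ⊂ ℝ² and let E be the union over n ≥ 1 and odd 0 < k < 2ⁿ of vertical segments of length 2^{-n} centered at (k·2^{-n}, 0). Then K = W ∪ E is a compact connected set, dim_H(K) = 1, H¹(E) = ∞, and there exists β₀ > 0 such that β_K(x, r) ≥ β₀ for all x ∈ W and all 0 < r < 1. -/

import Mathlib

open Metric MeasureTheory Filter Set

noncomputable section

/-- An affine line in a real normed space. -/
def IsLine {E : Type*} [NormedAddCommGroup E] [NormedSpace ℝ E] (L : Set E) : Prop :=
  ∃ a v : E, v ≠ 0 ∧ L = {p | ∃ t : ℝ, p = a + t • v}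

/-- The Jones `β`-number of `K` at `x` and scale `r`:
`inf` over affine lines `L` of `sup_{z ∈ K ∩ B(x,r)} dist(z, L) / r`. -/
noncomputable def betaNum {E : Type*} [NormedAddCommGroup E] [NormedSpace ℝ E]
    (K : Set E) (x : E) (r : ℝ) : ℝ :=
  sInf ((fun L => sSup ((fun z => infDist z L) '' (K ∩ closedBall x r)) / r) ''
    {L : Set E | IsLine L})

/-- The base segment `W = [0,1] × {0}`. -/
def combW : Set (EuclideanSpace ℝ (Fin 2)) := {p | p 0 ∈ Icc (0 : ℝ) 1 ∧ p 1 = 0}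

/-- The union over `n ≥ 1` and odd `0 < k < 2ⁿ` of vertical segments of length `2^{-n}`
centered at `(k·2^{-n}, 0)`. -/
def combE : Set (EuclideanSpace ℝ (Fin 2)) :=
  ⋃ n : ℕ, ⋃ _ : 1 ≤ n, ⋃ k : ℕ, ⋃ _ : k < 2 ^ n ∧ Odd k,
    {p | p 0 = (k : ℝ) / 2 ^ n ∧ p 1 ∈ Icc (-(1 / 2 ^ (n + 1)) : ℝ) (1 / 2 ^ (n + 1))}

/-!
`K` is the intersection over `N` of the compact sets obtained by replacing all teeth of
generation `≥ N` by the rectangle `[0,1] × [-2⁻ᴺ, 2⁻ᴺ]`, and it is the segment `W` with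
segments attached to it, hence connected. The teeth are pairwise disjoint isometric copies of
intervals, and generation `n` consists of `2ⁿ⁻¹` teeth of length `2⁻ⁿ`, i.e. of total
length `1/2`; so `H¹(E) = ∞`, which with `K` being a countable union of segments gives
`dim_H K = 1`.

For the `β`-bound, `K ∩ B(x, r)` contains a horizontal segment of `W` of length `r/8` and, on a
tooth of generation about `log₂ (1/r)`, a vertical segment of length `r/8`. If `w` is normal to
a line `L`, the first bounds `(r/8) |w₀|` and the second `(r/8) |w₁|` by the distances of their
endpoints to `L` (times `‖w‖`), so one of the four endpoints is at distance `≥ r/32` from `L`.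
-/

open Function
open scoped ENNReal RealInnerProductSpace

local notation "ℝ²" => EuclideanSpace ℝ (Fin 2)

theorem IsPreconnected.union_iUnion_of_inter_nonempty {X ι : Type*} [TopologicalSpace X]
    [Nonempty ι] {s : Set X} {t : ι → Set X} (hs : IsPreconnected s)
    (ht : ∀ i, IsPreconnected (t i)) (hst : ∀ i, (s ∩ t i).Nonempty) :
    IsPreconnected (s ∪ ⋃ i, t i) := by
  obtain ⟨x, hx, -⟩ := hst (Classical.arbitrary ι)
  rw [union_iUnion]
  exact isPreconnected_iUnion ⟨x, mem_iInter.2 fun _ => Or.inl hx⟩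
    fun i => hs.union' (hst i) (ht i)

theorem LipschitzWith.dimH_image_real_le_one {X : Type*} [EMetricSpace X] {K : NNReal}
    {f : ℝ → X} (hf : LipschitzWith K f) (s : Set ℝ) : dimH (f '' s) ≤ 1 :=
  (hf.dimH_image_le s).trans ((dimH_mono (subset_univ s)).trans Real.dimH_univ.le)

theorem abs_inner_sub_le_infDist_mul {E : Type*} [NormedAddCommGroup E] [InnerProductSpace ℝ E]
    {c v w : E} (hvw : ⟪v, w⟫ = 0) (z : E) :
    |⟪z - c, w⟫| ≤ infDist z {p | ∃ t : ℝ, p = c + t • v} * ‖w‖ := by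
  rcases eq_or_ne w 0 with rfl | hw
  · simp
  have hw' : 0 < ‖w‖ := norm_pos_iff.2 hw
  rw [← div_le_iff₀ hw']
  refine (le_infDist (s := {p | ∃ t : ℝ, p = c + t • v}) ⟨c, 0, by simp⟩).2 ?_
  rintro _ ⟨t, rfl⟩
  rw [div_le_iff₀ hw', dist_eq_norm]
  calc |⟪z - c, w⟫| = |⟪z - (c + t • v), w⟫| := by
        rw [sub_add_eq_sub_sub, inner_sub_left _ (t • v), real_inner_smul_left, hvw, mul_zero,
          sub_zero]
    _ ≤ ‖z - (c + t • v)‖ * ‖w‖ := abs_real_inner_le_norm _ _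

theorem bddAbove_infDist_image_inter_closedBall {X : Type*} [PseudoMetricSpace X] {L : Set X}
    (hL : L.Nonempty) (K : Set X) (x : X) (r : ℝ) :
    BddAbove ((fun z => infDist z L) '' (K ∩ closedBall x r)) := by
  obtain ⟨y, hy⟩ := hL
  refine ⟨r + dist x y, ?_⟩
  rintro _ ⟨z, ⟨-, hz⟩, rfl⟩
  calc infDist z L ≤ dist z y := infDist_le_dist_of_mem hy
    _ ≤ dist z x + dist x y := dist_triangle _ _ _
    _ ≤ r + dist x y := by rw [mem_closedBall] at hz; linarith

theorem IsLine.nonempty {E : Type*} [NormedAddCommGroup E] [NormedSpace ℝ E] {L : Set E}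
    (hL : IsLine L) : L.Nonempty := by
  obtain ⟨a, v, -, rfl⟩ := hL
  exact ⟨a, 0, by simp⟩

theorem vec2_eta (p : ℝ²) : !₂[p 0, p 1] = p := by
  ext i
  fin_cases i <;> rfl

theorem inner_vec2 (p q : ℝ²) : ⟪p, q⟫ = p 0 * q 0 + p 1 * q 1 := by
  simp [PiLp.inner_apply, Fin.sum_univ_two, mul_comm]

theorem isometry_horizontal (b : ℝ) : Isometry fun t : ℝ => (!₂[t, b] : ℝ²) :=
  Isometry.of_dist_eq fun s t => by
    simp [EuclideanSpace.dist_eq, Fin.sum_univ_two, Real.dist_eq, Real.sqrt_sq_eq_abs]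

theorem isometry_vertical (a : ℝ) : Isometry fun t : ℝ => (!₂[a, t] : ℝ²) :=
  Isometry.of_dist_eq fun s t => by
    simp [EuclideanSpace.dist_eq, Fin.sum_univ_two, Real.dist_eq, Real.sqrt_sq_eq_abs]

theorem dist_vec2_le (a b c d : ℝ) : dist (!₂[a, b] : ℝ²) !₂[c, d] ≤ |a - c| + |b - d| :=
  calc dist (!₂[a, b] : ℝ²) !₂[c, d]
      ≤ dist (!₂[a, b] : ℝ²) !₂[c, b] + dist (!₂[c, b] : ℝ²) !₂[c, d] :=
        dist_triangle _ _ _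
    _ = |a - c| + |b - d| := by
        rw [(isometry_horizontal b).dist_eq, (isometry_vertical c).dist_eq, Real.dist_eq,
          Real.dist_eq]

theorem vec2_mem_closedBall {a b c d r : ℝ} (h : |a - c| + |b - d| ≤ r) :
    (!₂[a, b] : ℝ²) ∈ closedBall !₂[c, d] r :=
  (dist_vec2_le a b c d).trans h

theorem norm_le_abs_add_abs (p : ℝ²) : ‖p‖ ≤ |p 0| + |p 1| := by
  have h₀ : (!₂[0, 0] : ℝ²) = 0 := by simp
  simpa [vec2_eta, h₀] using dist_vec2_le (p 0) (p 1) 0 0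

theorem IsLine.le_infDist_add_of_cross {L : Set ℝ²} (hL : IsLine L) {s : ℝ} (hs : 0 ≤ s)
    (a b c d : ℝ) :
    s ≤ infDist !₂[a, b] L + infDist !₂[a + s, b] L + infDist !₂[c, d] L
      + infDist !₂[c, d + s] L := by
  obtain ⟨o, v, hv, rfl⟩ := hL
  set w : ℝ² := !₂[-v 1, v 0]
  have hvw : ⟪v, w⟫ = 0 := by
    rw [inner_vec2]
    change v 0 * -v 1 + v 1 * v 0 = 0
    ring
  have hw : 0 < ‖w‖ := by
    have : ‖w‖ = ‖v‖ := by simp [EuclideanSpace.norm_eq, w, Fin.sum_univ_two, add_comm]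
    exact this ▸ norm_pos_iff.2 hv
  have pair : ∀ z z' : ℝ², |⟪z' - z, w⟫| ≤
      (infDist z {p | ∃ t : ℝ, p = o + t • v} + infDist z' {p | ∃ t : ℝ, p = o + t • v})
        * ‖w‖ := by
    intro z z'
    have hz := abs_inner_sub_le_infDist_mul (c := o) hvw z
    have hz' := abs_inner_sub_le_infDist_mul (c := o) hvw z'
    calc |⟪z' - z, w⟫| = |⟪z' - o, w⟫ - ⟪z - o, w⟫| := by
          rw [← inner_sub_left, sub_sub_sub_cancel_right]
      _ ≤ |⟪z' - o, w⟫| + |⟪z - o, w⟫| := abs_sub _ _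
      _ ≤ _ := by linarith
  have horizontal := pair !₂[a, b] !₂[a + s, b]
  have vertical := pair !₂[c, d] !₂[c, d + s]
  simp only [inner_vec2, w, PiLp.sub_apply, Matrix.cons_val_zero,
    Matrix.cons_val_one, add_sub_cancel_left, sub_self, zero_mul, add_zero, zero_add,
    abs_mul, abs_neg, abs_of_nonneg hs] at horizontal vertical
  have hw_le : ‖w‖ ≤ |v 1| + |v 0| := by simpa [w] using norm_le_abs_add_abs w
  refine le_of_mul_le_mul_right ?_ hw
  calc s * ‖w‖ ≤ s * (|v 1| + |v 0|) := mul_le_mul_of_nonneg_left hw_le hs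
    _ ≤ _ := by linarith

theorem le_betaNum_of_cross {K : Set ℝ²} {x : ℝ²} {r s : ℝ} (hr : 0 < r) (hs : 0 ≤ s)
    {a b c d : ℝ} (h₁ : !₂[a, b] ∈ K ∩ closedBall x r)
    (h₂ : !₂[a + s, b] ∈ K ∩ closedBall x r) (h₃ : !₂[c, d] ∈ K ∩ closedBall x r)
    (h₄ : !₂[c, d + s] ∈ K ∩ closedBall x r) :
    s / (4 * r) ≤ betaNum K x r := by
  refine le_csInf ⟨_, _, ⟨0, !₂[1, 0], by simp, rfl⟩, rfl⟩ ?_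
  rintro _ ⟨L, hL, rfl⟩
  have hM : ∀ z ∈ K ∩ closedBall x r,
      infDist z L ≤ sSup ((fun z => infDist z L) '' (K ∩ closedBall x r)) := fun z hz =>
    le_csSup (bddAbove_infDist_image_inter_closedBall hL.nonempty K x r) (mem_image_of_mem _ hz)
  rw [show s / (4 * r) = s / 4 / r by ring]
  refine (div_le_div_iff_of_pos_right hr).2 ?_
  linarith [hL.le_infDist_add_of_cross hs a b c d, hM _ h₁, hM _ h₂, hM _ h₃, hM _ h₄]

def vertSeg (c h : ℝ) : Set ℝ² := {p | p 0 = c ∧ p 1 ∈ Icc (-h) h}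

theorem vertSeg_eq_image (c h : ℝ) : vertSeg c h = (fun t : ℝ => !₂[c, t]) '' Icc (-h) h := by
  ext p
  constructor
  · rintro ⟨hc, hh⟩
    exact ⟨p 1, hh, by rw [← hc]; exact vec2_eta p⟩
  · rintro ⟨t, ht, rfl⟩
    exact ⟨rfl, ht⟩

theorem isCompact_vertSeg (c h : ℝ) : IsCompact (vertSeg c h) :=
  vertSeg_eq_image c h ▸ isCompact_Icc.image (isometry_vertical c).continuous

theorem isPreconnected_vertSeg (c h : ℝ) : IsPreconnected (vertSeg c h) :=
  vertSeg_eq_image c h ▸ isPreconnected_Icc.image _ (isometry_vertical c).continuous.continuousOn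

theorem dimH_vertSeg_le (c h : ℝ) : dimH (vertSeg c h) ≤ 1 :=
  vertSeg_eq_image c h ▸ (isometry_vertical c).lipschitz.dimH_image_real_le_one _

theorem hausdorffMeasure_vertSeg (c h : ℝ) :
    μH[1] (vertSeg c h) = ENNReal.ofReal (2 * h) := by
  rw [vertSeg_eq_image, (isometry_vertical c).hausdorffMeasure_image (Or.inl zero_le_one),
    hausdorffMeasure_real, Real.volume_Icc, sub_neg_eq_add, two_mul]

def rect (h : ℝ) : Set ℝ² := {p | p 0 ∈ Icc 0 1 ∧ p 1 ∈ Icc (-h) h}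

theorem isCompact_rect (h : ℝ) : IsCompact (rect h) := by
  have : rect h = (fun q : ℝ × ℝ => !₂[q.1, q.2]) '' Icc 0 1 ×ˢ Icc (-h) h := by
    ext p
    constructor
    · rintro ⟨h₀, h₁⟩
      exact ⟨(p 0, p 1), ⟨h₀, h₁⟩, vec2_eta p⟩
    · rintro ⟨q, ⟨h₀, h₁⟩, rfl⟩
      exact ⟨h₀, h₁⟩
  rw [this]
  exact (isCompact_Icc.prod isCompact_Icc).image (by fun_prop)

theorem rect_mono {h h' : ℝ} (hh : h ≤ h') : rect h ⊆ rect h' :=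
  fun _ ⟨h₀, h₁⟩ => ⟨h₀, h₁.1.trans' (neg_le_neg hh), h₁.2.trans hh⟩

theorem combW_eq_image : combW = (fun t : ℝ => !₂[t, 0]) '' Icc 0 1 := by
  ext p
  constructor
  · rintro ⟨h₀, h₁⟩
    exact ⟨p 0, h₀, by rw [← h₁]; exact vec2_eta p⟩
  · rintro ⟨t, ht, rfl⟩
    exact ⟨ht, rfl⟩

theorem combW_subset_rect {h : ℝ} (hh : 0 ≤ h) : combW ⊆ rect h :=
  fun p ⟨h₀, h₁⟩ => ⟨h₀, by rw [h₁]; exact ⟨neg_nonpos.2 hh, hh⟩⟩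

/-- The segment of `combE` with parameters `n + 1` and `k = 2j + 1`. -/
def combTooth (n j : ℕ) : Set ℝ² := vertSeg ((2 * j + 1) / 2 ^ (n + 1)) (1 / 2 ^ (n + 2))

theorem combE_eq_iUnion : combE = ⋃ i : Σ n, Fin (2 ^ n), combTooth i.1 i.2 := by
  ext p
  simp only [combE, combTooth, vertSeg, mem_iUnion, Sigma.exists]
  constructor
  · rintro ⟨n, hn, k, ⟨hk, j, rfl⟩, hp⟩
    obtain ⟨m, rfl⟩ := Nat.exists_eq_add_of_le' hn
    refine ⟨m, ⟨j, by rw [pow_succ] at hk; omega⟩, ?_⟩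
    simpa using hp
  · rintro ⟨m, j, hp⟩
    refine ⟨m + 1, by omega, 2 * j + 1, ⟨by rw [pow_succ]; omega, j, rfl⟩, ?_⟩
    simpa using hp

theorem combTooth_subset_combE {n j : ℕ} (hj : j < 2 ^ n) : combTooth n j ⊆ combE := by
  rw [combE_eq_iUnion]
  exact subset_iUnion_of_subset ⟨n, j, hj⟩ subset_rfl

theorem odd_dyadic_mem_Icc {n j : ℕ} (hj : j < 2 ^ n) :
    (2 * j + 1 : ℝ) / 2 ^ (n + 1) ∈ Icc 0 1 := by
  have hj' : (2 * j + 1 : ℝ) ≤ 2 ^ (n + 1) := by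
    rw [pow_succ]; exact_mod_cast (by omega : 2 * j + 1 ≤ 2 ^ n * 2)
  exact ⟨by positivity, (div_le_one (by positivity)).2 hj'⟩

theorem combTooth_subset_rect {n j : ℕ} (hj : j < 2 ^ n) :
    combTooth n j ⊆ rect (1 / 2 ^ (n + 2)) :=
  fun _ ⟨h₀, h₁⟩ => ⟨h₀ ▸ odd_dyadic_mem_Icc hj, h₁⟩

theorem center_mem_combTooth (n j : ℕ) :
    (!₂[(2 * j + 1 : ℝ) / 2 ^ (n + 1), 0] : ℝ²) ∈ combTooth n j :=
  ⟨rfl, neg_nonpos.2 (by positivity), by positivity⟩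

theorem odd_div_two_pow_inj {i j m n : ℕ}
    (h : (2 * i + 1 : ℝ) / 2 ^ m = (2 * j + 1) / 2 ^ n) : m = n ∧ i = j := by
  rw [div_eq_div_iff (by positivity) (by positivity)] at h
  have h' : (2 * i + 1) * 2 ^ n = (2 * j + 1) * 2 ^ m := by exact_mod_cast h
  have v (k l : ℕ) : padicValNat 2 ((2 * k + 1) * 2 ^ l) = l := by
    rw [padicValNat.mul (by omega) (by positivity), padicValNat.prime_pow,
      padicValNat.eq_zero_of_not_dvd (by omega), zero_add]
  have hmn : m = n := by simpa [v] using congrArg (padicValNat 2) h'.symm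
  subst hmn
  exact ⟨rfl, by simpa using h'⟩

theorem pairwise_disjoint_combTooth :
    Pairwise (Disjoint on fun i : Σ n, Fin (2 ^ n) => combTooth i.1 i.2) := by
  rintro ⟨m, i⟩ ⟨n, j⟩ hne
  refine Set.disjoint_left.2 fun p hp hq => hne ?_
  obtain ⟨hmn, hij⟩ : m + 1 = n + 1 ∧ (i : ℕ) = j :=
    odd_div_two_pow_inj (hp.1.symm.trans hq.1)
  obtain rfl : m = n := by omega
  rw [Fin.ext hij]

theorem hausdorffMeasure_combE : μH[1] combE = ∞ := by
  rw [combE_eq_iUnion, measure_iUnion pairwise_disjoint_combTooth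
    fun i => (isCompact_vertSeg _ _).isClosed.measurableSet, ENNReal.tsum_sigma']
  simp_rw [combTooth, hausdorffMeasure_vertSeg, tsum_fintype, Finset.sum_const, Finset.card_univ,
    Fintype.card_fin, nsmul_eq_mul]
  have level (n : ℕ) : ((2 ^ n : ℕ) : ℝ≥0∞) * ENNReal.ofReal (2 * (1 / 2 ^ (n + 2))) =
      ENNReal.ofReal (1 / 2) := by
    rw [← ENNReal.ofReal_natCast, ← ENNReal.ofReal_mul (by positivity)]
    congr 1
    push_cast
    field_simp
    ring
  simp_rw [level]
  exact ENNReal.tsum_const_eq_top_of_ne_zero (by norm_num)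

/-- Every tooth of generation `≥ N` lies in the rectangle, so `combW ∪ combE` is the
intersection of these compact sets. -/
def combApprox (N : ℕ) : Set ℝ² :=
  rect (1 / 2 ^ N) ∪ ⋃ i : Σ n : Fin N, Fin (2 ^ (n : ℕ)), combTooth i.1 i.2

theorem isCompact_combApprox (N : ℕ) : IsCompact (combApprox N) :=
  (isCompact_rect _).union (isCompact_iUnion fun _ => isCompact_vertSeg _ _)

theorem eq_zero_of_forall_abs_le_one_div_two_pow {y : ℝ} (hy : ∀ N : ℕ, |y| ≤ 1 / 2 ^ N) :
    y = 0 := by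
  refine abs_nonpos_iff.1 (ge_of_tendsto' (tendsto_pow_atTop_nhds_zero_of_lt_one
    (by norm_num : (0 : ℝ) ≤ 1 / 2) (by norm_num)) fun N => ?_)
  simpa [one_div_pow] using hy N

theorem combW_union_combE_eq_iInter : combW ∪ combE = ⋂ N, combApprox N := by
  refine Subset.antisymm (fun p hp => mem_iInter.2 fun N => ?_) fun p hp => ?_
  · rcases hp with hW | hE
    · exact Or.inl (combW_subset_rect (by positivity) hW)
    rw [combE_eq_iUnion, mem_iUnion] at hE
    obtain ⟨⟨n, j⟩, hp⟩ := hE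
    by_cases hn : n < N
    · exact Or.inr (mem_iUnion.2 ⟨⟨⟨n, hn⟩, j⟩, hp⟩)
    · refine Or.inl (rect_mono ?_ (combTooth_subset_rect j.2 hp))
      exact one_div_pow_le_one_div_pow_of_le one_le_two (by omega)
  · by_cases hE : p ∈ combE
    · exact Or.inr hE
    have hrect : ∀ N : ℕ, p ∈ rect (1 / 2 ^ N) := fun N =>
      ((mem_iInter.1 hp N).resolve_right fun h => hE <| by
        obtain ⟨⟨n, j⟩, hj⟩ := mem_iUnion.1 h
        exact combTooth_subset_combE j.2 hj)
    exact Or.inl ⟨(hrect 0).1,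
      eq_zero_of_forall_abs_le_one_div_two_pow fun N => abs_le.2 (hrect N).2⟩

theorem isCompact_comb : IsCompact (combW ∪ combE) := by
  rw [combW_union_combE_eq_iInter]
  exact (isCompact_combApprox 0).of_isClosed_subset
    (isClosed_iInter fun N => (isCompact_combApprox N).isClosed) (iInter_subset _ 0)

theorem isConnected_comb : IsConnected (combW ∪ combE) := by
  refine ⟨⟨!₂[0, 0], Or.inl ⟨by simp, rfl⟩⟩, ?_⟩
  rw [combE_eq_iUnion, combW_eq_image]
  refine isPreconnected_Icc.image _ (isometry_horizontal 0).continuous.continuousOn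
    |>.union_iUnion_of_inter_nonempty (fun _ => isPreconnected_vertSeg _ _) fun ⟨n, j⟩ =>
      ⟨_, ⟨_, odd_dyadic_mem_Icc j.2, rfl⟩, center_mem_combTooth n j⟩

theorem dimH_comb : dimH (combW ∪ combE) = 1 := by
  refine le_antisymm ?_ ?_
  · rw [dimH_union, combW_eq_image, combE_eq_iUnion, dimH_iUnion]
    exact max_le ((isometry_horizontal 0).lipschitz.dimH_image_real_le_one _)
      (iSup_le fun _ => dimH_vertSeg_le _ _)
  · calc (1 : ℝ≥0∞) ≤ dimH combE := by
          simpa using le_dimH_of_hausdorffMeasure_eq_top (d := 1)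
            (by simpa using hausdorffMeasure_combE)
      _ ≤ dimH (combW ∪ combE) := dimH_mono subset_union_right

theorem exists_odd_dyadic_near {a : ℝ} (ha₀ : 0 ≤ a) (ha₁ : a < 1) (m : ℕ) :
    ∃ j : ℕ, j < 2 ^ m ∧ |(2 * j + 1 : ℝ) / 2 ^ (m + 1) - a| ≤ 1 / 2 ^ (m + 1) := by
  refine ⟨⌊a * 2 ^ m⌋₊, (Nat.floor_lt (by positivity)).2 ?_, ?_⟩
  · push_cast
    exact mul_lt_of_lt_one_left (by positivity) ha₁
  have hlo : (⌊a * 2 ^ m⌋₊ : ℝ) ≤ a * 2 ^ m := Nat.floor_le (by positivity)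
  have hhi : a * 2 ^ m < ⌊a * 2 ^ m⌋₊ + 1 := Nat.lt_floor_add_one _
  have key : (2 * ⌊a * 2 ^ m⌋₊ + 1 : ℝ) / 2 ^ (m + 1) - a =
      (2 * ⌊a * 2 ^ m⌋₊ + 1 - 2 * (a * 2 ^ m)) / 2 ^ (m + 1) := by
    field_simp
    ring
  rw [key, abs_div, abs_of_pos (by positivity : (0 : ℝ) < 2 ^ (m + 1)),
    div_le_div_iff_of_pos_right (by positivity), abs_le]
  constructor <;> linarith

theorem exists_dyadic_scale {r : ℝ} (hr : 0 < r) (hr₄ : r ≤ 4) :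
    ∃ m : ℕ, 1 / 2 ^ (m + 1) < r / 4 ∧ r / 16 ≤ 1 / 2 ^ (m + 2) := by
  obtain ⟨m, hm, hm'⟩ := exists_nat_pow_near ((one_le_div hr).2 hr₄ : 1 ≤ 4 / r) one_lt_two
  rw [le_div_iff₀ hr] at hm
  rw [div_lt_iff₀ hr] at hm'
  refine ⟨m, ?_, ?_⟩
  · rw [div_lt_div_iff₀ (by positivity) (by norm_num)]
    linarith
  · rw [div_le_div_iff₀ (by norm_num) (by positivity), pow_add]
    linarith

theorem exists_cross_mem_comb {x : ℝ²} (hx : x ∈ combW) {r : ℝ} (hr : 0 < r)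
    (hr₁ : r < 1) :
    ∃ a c d : ℝ, !₂[a, 0] ∈ (combW ∪ combE) ∩ closedBall x r ∧
      !₂[a + r / 8, 0] ∈ (combW ∪ combE) ∩ closedBall x r ∧
      !₂[c, d] ∈ (combW ∪ combE) ∩ closedBall x r ∧
      !₂[c, d + r / 8] ∈ (combW ∪ combE) ∩ closedBall x r := by
  obtain ⟨x₀, ⟨hx₀, hx₁⟩, rfl⟩ := combW_eq_image ▸ hx
  set a := min x₀ (1 - r / 8)
  have ha₀ : 0 ≤ a := le_min hx₀ (by linarith)
  have ha₁ : a + r / 8 ≤ 1 := by linarith [min_le_right x₀ (1 - r / 8)]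
  have hax : |a - x₀| ≤ r / 8 := by
    have : x₀ - r / 8 ≤ a := le_min (by linarith) (by linarith)
    rw [abs_le]
    constructor <;> linarith [min_le_left x₀ (1 - r / 8)]
  obtain ⟨m, hstep, hheight⟩ := exists_dyadic_scale hr (by linarith)
  obtain ⟨j, hj, hc⟩ := exists_odd_dyadic_near ha₀ (by linarith) m
  set c : ℝ := (2 * j + 1) / 2 ^ (m + 1)
  have hcx : |c - x₀| ≤ r / 2 := by
    calc |c - x₀| ≤ |c - a| + |a - x₀| := abs_sub_le _ _ _
      _ ≤ r / 2 := by linarith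
  have htooth : ∀ t, |t| ≤ r / 16 →
      !₂[c, t] ∈ (combW ∪ combE) ∩ closedBall !₂[x₀, 0] r :=
    have hE : combTooth m j ⊆ combE := combTooth_subset_combE hj
    fun t ht => ⟨Or.inr (hE ⟨rfl, abs_le.1 (ht.trans hheight)⟩),
      vec2_mem_closedBall (by rw [sub_zero]; linarith)⟩
  have hbase : ∀ s, 0 ≤ s → s ≤ r / 8 →
      !₂[a + s, 0] ∈ (combW ∪ combE) ∩ closedBall !₂[x₀, 0] r := fun s hs hs' =>
    ⟨Or.inl ⟨⟨show 0 ≤ a + s by linarith, show a + s ≤ 1 by linarith⟩, rfl⟩,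
      vec2_mem_closedBall (by
        rw [sub_self, abs_zero, add_zero, add_sub_right_comm]
        linarith [abs_add_le (a - x₀) s, abs_of_nonneg hs])⟩
  refine ⟨a, c, -(r / 16), by simpa using hbase 0 le_rfl (by positivity),
    hbase _ (by positivity) le_rfl, htooth _ ?_, htooth _ ?_⟩
  · rw [abs_neg, abs_of_pos (by positivity)]
  · rw [show -(r / 16) + r / 8 = r / 16 by ring, abs_of_pos (by positivity)]

/-- `K = W ∪ E` (the comb) is compact and connected, `dim_H(K) = 1`,
`H¹(E) = ∞`, and the β-numbers of `K` at points of `W` are uniformly bounded below. -/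
theorem comb_properties :
    IsCompact (combW ∪ combE) ∧ IsConnected (combW ∪ combE) ∧
      dimH (combW ∪ combE) = 1 ∧ μH[1] combE = ⊤ ∧
      ∃ β₀ : ℝ, 0 < β₀ ∧ ∀ x ∈ combW, ∀ r : ℝ, 0 < r → r < 1 →
        β₀ ≤ betaNum (combW ∪ combE) x r := by
  refine ⟨isCompact_comb, isConnected_comb, dimH_comb, hausdorffMeasure_combE, 1 / 32,
    by norm_num, fun x hx r hr hr₁ => ?_⟩
  obtain ⟨a, c, d, h₁, h₂, h₃, h₄⟩ := exists_cross_mem_comb hx hr hr₁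
  calc (1 / 32 : ℝ) = r / 8 / (4 * r) := by field_simp; ring
    _ ≤ betaNum (combW ∪ combE) x r :=
      le_betaNum_of_cross hr (by positivity) h₁ h₂ h₃ h₄
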